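/- Let m ≥ 1, let D_1,…,D_m ≥ 1 be integers with n = D_1+…+D_m, and let a ≥ 1 be an integer. The number of words f : {1,…,n} → {1,…,a} such that v(f) = w* (the reversed pattern) equals Σ over integer sequences 0 = k_0 < k_1 < … < k_{m-1} < a of (a - k_{m-1})^{D_m} · ∏_{j=1}^{m-1} ((k_j - k_{j-1})^{D_j} - (k_j - k_{j-1} - 1)^{D_j}). Consequently, the separation distance after an a-shuffle of the sorted deck equals 1 - (n!/(D_1!⋯D_m!))·a^{-n} times this sum. -/

import Mathlib

/-- Bayer–Diaconis encoding: for a shuffle word `f : Fin n → Fin a`, the card at final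
position `i` originally occupied 1-based position `pos f i`. -/
def pos {n a : ℕ} (f : Fin n → Fin a) (i : Fin n) : ℕ :=
  (Finset.univ.filter fun j => f j < f i).card +
    (Finset.univ.filter fun j => j ≤ i ∧ f j = f i).card

/-- Partial sums of the pile sizes `D 0, D 1, …` (0-indexed: `D t` is the paper's `D_{t+1}`). -/
def dPrefix (D : ℕ → ℕ) (t : ℕ) : ℕ := ∑ s ∈ Finset.range t, D s

/-- The (0-based) label carried by 0-based original position `q` in the sorted deck. -/
def labelOf (D : ℕ → ℕ) (m q : ℕ) : ℕ :=
  ((Finset.range m).filter fun t => dPrefix D (t + 1) ≤ q).card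

/-- The label pattern `v(f)` produced by the shuffle word `f` from the sorted deck. -/
def vpat (D : ℕ → ℕ) (m : ℕ) {n a : ℕ} (f : Fin n → Fin a) : Fin n → ℕ :=
  fun i => labelOf D m (pos f i - 1)

/-- Extension of a tuple `k : Fin m → Fin a` to a sequence `ℕ → ℕ` (zero beyond `m`). -/
def extSeq {m a : ℕ} (k : Fin m → Fin a) : ℕ → ℕ :=
  fun j => if h : j < m then (k ⟨j, h⟩ : ℕ) else 0

/-- The summand `(a - k_{m-1})^{D_m} ∏_{j=1}^{m-1} ((k_j - k_{j-1})^{D_j} - (k_j - k_{j-1} - 1)^{D_j})`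
for a sequence `0 = k_0 < k_1 < ⋯ < k_{m-1} < a` (here 0-indexed: `D j` is the paper's `D_{j+1}`). -/
def seqTerm (D : ℕ → ℕ) (m a : ℕ) (k : ℕ → ℕ) : ℕ :=
  (a - k (m - 1)) ^ (D (m - 1)) *
    ∏ j ∈ Finset.range (m - 1), ((k (j + 1) - k j) ^ (D j) - (k (j + 1) - k j - 1) ^ (D j))


/-!
The card at final position `i` comes from the original position given by the rank of `(f i, i)`
in lexicographic order. Hence `v(f) = w*` exactly when `f` separates the blocks of `w*`: every
letter on a block with a smaller label is smaller than every letter on a block with a larger one.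
Such a word determines `k_j = 1 + (largest letter used before block j)`, and conversely, given
`0 = k_0 < ⋯ < k_{m-1} < a`, block `j < m - 1` is any word in letters `[k_j, k_{j+1})` that uses
`k_{j+1} - 1` (there are `(k_{j+1} - k_j)^{D_j} - (k_{j+1} - k_j - 1)^{D_j}` of them), while the
last block is any word in letters `[k_{m-1}, a)`. The separation distance is then a substitution.
-/

open Finset

lemma dPrefix_mono (D : ℕ → ℕ) : Monotone (dPrefix D) := fun _ _ h =>
  sum_le_sum_of_subset (range_subset_range.2 h)

lemma labelOf_mono (D : ℕ → ℕ) (m : ℕ) : Monotone (labelOf D m) := fun _ _ h =>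
  card_le_card (monotone_filter_right _ fun _ _ ht => ht.trans h)

lemma labelOf_lt_iff (D : ℕ → ℕ) {m t : ℕ} (ht : t ≤ m) (q : ℕ) :
    labelOf D m q < t ↔ q < dPrefix D t := by
  constructor
  · intro h
    by_contra! hq
    have : range t ⊆ (range m).filter fun s => dPrefix D (s + 1) ≤ q := fun s hs => by
      rw [mem_range] at hs
      exact mem_filter.2 ⟨mem_range.2 (by omega), (dPrefix_mono D hs).trans hq⟩
    have := card_le_card this
    rw [card_range] at this
    unfold labelOf at h; omega
  · intro hq
    have ht0 : t ≠ 0 := by rintro rfl; simp [dPrefix] at hq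
    have : (range m).filter (fun s => dPrefix D (s + 1) ≤ q) ⊆ range (t - 1) := fun s hs => by
      rw [mem_filter] at hs
      have : s + 1 < t := (dPrefix_mono D).reflect_lt (hs.2.trans_lt hq)
      exact mem_range.2 (by omega)
    have := card_le_card this
    rw [card_range] at this
    unfold labelOf; omega

lemma labelOf_eq_iff (D : ℕ → ℕ) {m t : ℕ} (ht : t < m) (q : ℕ) :
    labelOf D m q = t ↔ dPrefix D t ≤ q ∧ q < dPrefix D (t + 1) := by
  have := labelOf_lt_iff D ht.le q
  have := labelOf_lt_iff D (show t + 1 ≤ m by omega) q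
  omega

/-- The pattern `w*`. -/
def reversedPattern (D : ℕ → ℕ) (m n : ℕ) (i : Fin n) : ℕ := labelOf D m (n - 1 - i)

section reversedPattern

variable {D : ℕ → ℕ} {m n : ℕ}

lemma reversedPattern_antitone : Antitone (reversedPattern D m n) := fun i i' h =>
  labelOf_mono D m (by have := i'.isLt; simp only [Fin.le_def] at h; omega)

variable (hn : n = dPrefix D m)
include hn

lemma reversedPattern_lt (i : Fin n) : reversedPattern D m n i < m :=
  (labelOf_lt_iff D le_rfl _).2 (by rw [← hn]; omega)

lemma card_reversedPattern_lt {t : ℕ} (ht : t ≤ m) :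
    #{i : Fin n | reversedPattern D m n i < t} = dPrefix D t := by
  have hP : dPrefix D t ≤ n := hn ▸ dPrefix_mono D ht
  calc #{i : Fin n | reversedPattern D m n i < t}
      = #{i : Fin n | (i : ℕ) < dPrefix D t} := card_equiv Fin.revPerm fun i => by
        simp only [mem_filter, mem_univ, true_and, reversedPattern, labelOf_lt_iff D ht,
          Fin.revPerm_apply, Fin.val_rev]
        omega
    _ = dPrefix D t := by rw [Fin.card_filter_val_lt, min_eq_right hP]

lemma card_reversedPattern_eq {j : ℕ} (hj : j < m) :
    #{i : Fin n | reversedPattern D m n i = j} = D j := by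
  have hsplit : #{i : Fin n | reversedPattern D m n i < j + 1} =
      #{i : Fin n | reversedPattern D m n i < j} + #{i : Fin n | reversedPattern D m n i = j} := by
    rw [← card_union_of_disjoint (disjoint_filter.2 fun _ _ h h' => by omega), ← filter_or]
    congr 1; ext; simp only [mem_filter, mem_univ, true_and]; omega
  rw [card_reversedPattern_lt hn (show j + 1 ≤ m by omega), card_reversedPattern_lt hn hj.le,
    dPrefix, sum_range_succ] at hsplit
  exact (Nat.add_left_cancel hsplit).symm

end reversedPattern

lemma pos_eq_card_toLex_lt {n a : ℕ} (f : Fin n → Fin a) (i : Fin n) :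
    pos f i = #{j | toLex (f j, j) < toLex (f i, i)} + 1 := by
  have hle : #{j | toLex (f j, j) ≤ toLex (f i, i)} =
      #{j | toLex (f j, j) < toLex (f i, i)} + 1 := by
    rw [← card_insert_of_notMem (s := filter _ _) (a := i) (by simp)]
    congr 1; ext j
    simp only [mem_filter, mem_univ, true_and, mem_insert, le_iff_lt_or_eq, toLex_inj,
      Prod.mk.injEq]
    tauto
  rw [← hle, pos, ← card_union_of_disjoint (disjoint_filter.2 fun j _ h h' => (ne_of_lt h) h'.2),
    ← filter_or]
  congr 1; ext j
  simp only [mem_filter, mem_univ, true_and, Prod.Lex.toLex_le_toLex]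
  tauto

lemma card_filter_lt_lt_card_filter_lt {ι β : Type*} [Fintype ι] [LinearOrder β] {key : ι → β}
    {x y : ι} (h : key x < key y) : #{j | key j < key x} < #{j | key j < key y} :=
  card_lt_card <| (ssubset_iff_of_subset (monotone_filter_right _ fun _ _ hj => hj.trans h)).2
    ⟨x, by simp [h]⟩

theorem vpat_eq_reversedPattern_iff {D : ℕ → ℕ} {m n a : ℕ} (hn : n = dPrefix D m)
    (f : Fin n → Fin a) :
    vpat D m f = reversedPattern D m n ↔
      ∀ i i', reversedPattern D m n i < reversedPattern D m n i' → f i < f i' := by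
  have hv : ∀ i, vpat D m f i = labelOf D m #{j | toLex (f j, j) < toLex (f i, i)} := fun i => by
    simp [vpat, pos_eq_card_toLex_lt]
  constructor
  · intro H i i' hw
    by_contra! hf
    have hi : i' < i := lt_of_not_ge fun h => (reversedPattern_antitone h).not_gt hw
    have := labelOf_mono D m (card_filter_lt_lt_card_filter_lt (key := fun j => toLex (f j, j))
      (Prod.Lex.toLex_lt_toLex'.2 ⟨hf, fun _ => hi⟩)).le
    rw [← hv, ← hv, H] at this
    exact this.not_gt hw
  · intro H
    funext i
    have hwi := reversedPattern_lt hn i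
    rw [hv, labelOf_eq_iff D hwi, ← card_reversedPattern_lt hn hwi.le,
      ← card_reversedPattern_lt hn (show reversedPattern D m n i + 1 ≤ m by omega)]
    constructor
    · exact card_le_card (monotone_filter_right _ fun j _ hj =>
        Prod.Lex.toLex_lt_toLex.2 (Or.inl (H j i hj)))
    · refine card_lt_card ((ssubset_iff_of_subset (monotone_filter_right _ fun j _ hj => ?_)).2
        ⟨i, by simp⟩)
      by_contra! hij
      exact hj.not_gt (Prod.Lex.toLex_lt_toLex.2 (Or.inl (H i j (by omega))))

lemma Fin.card_filter_val_mem_Ico {a lo hi : ℕ} (hhi : hi ≤ a) :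
    #{c : Fin a | lo ≤ (c : ℕ) ∧ (c : ℕ) < hi} = hi - lo := by
  rw [← Nat.card_Ico, ← card_map Fin.valEmbedding]
  congr 1; ext q
  simp only [mem_map, mem_filter, mem_univ, true_and, Fin.valEmbedding_apply, mem_Ico]
  exact ⟨by rintro ⟨c, hc, rfl⟩; exact hc, fun hq => ⟨⟨q, by omega⟩, hq, rfl⟩⟩

lemma card_filter_forall_restrict_mem {ι κ α : Type*} [Fintype ι] [DecidableEq ι] [Fintype κ]
    [DecidableEq κ] [Fintype α] [DecidableEq α] (g : ι → κ)
    (A : ∀ j, Finset ({i // g i = j} → α)) :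
    #{f : ι → α | ∀ j, (fun x : {i // g i = j} => f x) ∈ A j} = ∏ j, #(A j) := by
  have hF : ∀ (F : ∀ j, {i // g i = j} → α) j,
      (fun x : {i // g i = j} => F (g x) ⟨x, rfl⟩) = F j :=
    fun F j => funext fun ⟨_, hx⟩ => by subst hx; rfl
  rw [← Fintype.card_piFinset]
  refine card_nbij' (fun f j x => f x) (fun F i => F (g i) ⟨i, rfl⟩) ?_ ?_ ?_ ?_
  · intro f hf; simpa using hf
  · intro F hF'; simpa [hF] using hF'
  · intro f _; rfl
  · intro F _; funext j; exact hF F j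

section IntervalWords

variable (β : Type*) [Fintype β] [DecidableEq β] {a lo hi : ℕ}

lemma card_filter_forall_mem_Ico (hhi : hi ≤ a) :
    #{h : β → Fin a | ∀ x, lo ≤ (h x : ℕ) ∧ (h x : ℕ) < hi} = (hi - lo) ^ Fintype.card β := by
  have : ({h : β → Fin a | ∀ x, lo ≤ (h x : ℕ) ∧ (h x : ℕ) < hi} : Finset _) =
      Fintype.piFinset fun _ => {c : Fin a | lo ≤ (c : ℕ) ∧ (c : ℕ) < hi} := by
    ext h; simp [Fintype.mem_piFinset]
  rw [this, Fintype.card_piFinset, prod_const, Fin.card_filter_val_mem_Ico hhi, card_univ]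

lemma card_filter_forall_mem_Ico_and_exists (hlo : lo < hi) (hhi : hi ≤ a) :
    #{h : β → Fin a | (∀ x, lo ≤ (h x : ℕ) ∧ (h x : ℕ) < hi) ∧ ∃ x, (h x : ℕ) + 1 = hi} =
      (hi - lo) ^ Fintype.card β - (hi - lo - 1) ^ Fintype.card β := by
  have hsub : ({h : β → Fin a | ∀ x, lo ≤ (h x : ℕ) ∧ (h x : ℕ) < hi - 1} : Finset _) ⊆
      ({h : β → Fin a | ∀ x, lo ≤ (h x : ℕ) ∧ (h x : ℕ) < hi} : Finset _) :=
    monotone_filter_right _ fun h _ H x => ⟨(H x).1, by have := (H x).2; omega⟩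
  rw [← card_filter_forall_mem_Ico β hhi, show hi - lo - 1 = hi - 1 - lo by omega,
    ← card_filter_forall_mem_Ico β (show hi - 1 ≤ a by omega), ← card_sdiff_of_subset hsub]
  congr 1; ext h
  simp only [mem_filter, mem_univ, true_and, mem_sdiff, not_forall]
  constructor
  · rintro ⟨H, x, hx⟩; exact ⟨H, x, by omega⟩
  · rintro ⟨H, x, hx⟩; exact ⟨H, x, by have := H x; omega⟩

end IntervalWords

section BlockIncreasing

variable {ι : Type*} [Fintype ι] {m a : ℕ} (g : ι → Fin m)

/-- The paper's `k_j` attached to the word `f`. -/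
def blockStart (f : ι → Fin a) (j : ℕ) : ℕ :=
  ({i | (g i : ℕ) < j} : Finset ι).sup fun i => (f i : ℕ) + 1

variable {g} {f : ι → Fin a}

lemma blockStart_zero : blockStart g f 0 = 0 := by simp [blockStart]

lemma blockStart_mono : Monotone (blockStart g f) := fun _ _ h =>
  sup_mono (monotone_filter_right _ fun _ _ hi => hi.trans_le h)

lemma lt_blockStart_succ (i : ι) : (f i : ℕ) < blockStart g f (g i + 1) :=
  Nat.lt_of_succ_le (le_sup (f := fun i => (f i : ℕ) + 1) (by simp))

variable (hf : ∀ i i', g i < g i' → f i < f i')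
include hf

lemma blockStart_le (i : ι) : blockStart g f (g i) ≤ f i :=
  Finset.sup_le fun i' hi' => hf i' i (by simpa using hi')

lemma blockStart_lt {j : Fin m} (hj : ∃ i, g i = j) : blockStart g f j < a := by
  obtain ⟨i, rfl⟩ := hj
  exact (blockStart_le hf i).trans_lt (f i).isLt

lemma exists_add_one_eq_blockStart_succ {j : Fin m} (hj : ∃ i, g i = j) :
    ∃ i, g i = j ∧ (f i : ℕ) + 1 = blockStart g f (j + 1) := by
  obtain ⟨i₀, rfl⟩ := hj
  obtain ⟨i, hi, hmax⟩ := exists_mem_eq_sup ({i | (g i : ℕ) < g i₀ + 1} : Finset ι)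
    ⟨i₀, by simp⟩ fun i => (f i : ℕ) + 1
  refine ⟨i, Fin.ext ?_, hmax.symm⟩
  have hle : (g i : ℕ) ≤ g i₀ := by simp only [mem_filter] at hi; omega
  by_contra hne
  have h₁ : (f i₀ : ℕ) < f i + 1 := hmax ▸ lt_blockStart_succ i₀
  have h₂ : f i < f i₀ := hf i i₀ (Fin.lt_def.2 (by omega))
  omega

end BlockIncreasing

section Cuts

variable {m a : ℕ} (k : Fin m → Fin a)

/-- Block `j` receives the letters in `[cutAt k j, cutAt k (j + 1))`. -/
def cutAt (j : ℕ) : ℕ := if h : j < m then k ⟨j, h⟩ else a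

variable {k}

lemma cutAt_of_lt {j : ℕ} (h : j < m) : cutAt k j = k ⟨j, h⟩ := dif_pos h

lemma cutAt_of_le {j : ℕ} (h : m ≤ j) : cutAt k j = a := dif_neg (by omega)

lemma cutAt_le (j : ℕ) : cutAt k j ≤ a := by
  unfold cutAt; split_ifs
  exacts [(Fin.is_lt _).le, le_rfl]

lemma cutAt_mono (hk : Monotone k) : Monotone (cutAt k) := by
  intro j j' h
  unfold cutAt
  split_ifs with h₁ h₂ h₂
  · exact hk (Fin.mk_le_mk.2 h)
  · exact (Fin.is_lt _).le
  · omega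
  · exact le_rfl

lemma cutAt_lt_cutAt_succ (hk : StrictMono k) {j : ℕ} (h : j + 1 < m) :
    cutAt k j < cutAt k (j + 1) := by
  rw [cutAt_of_lt h, cutAt_of_lt (by omega)]
  exact hk (Fin.mk_lt_mk.2 (by omega))

end Cuts

section Fibers

variable {ι : Type*} [Fintype ι] {m a : ℕ} {g : ι → Fin m} {k : Fin m → Fin a} {f : ι → Fin a}

theorem blockIncreasing_and_blockStart_eq_iff (hg : Function.Surjective g)
    (hk₀ : extSeq k 0 = 0) (hk : Monotone k) :
    ((∀ i i', g i < g i' → f i < f i') ∧ ∀ j : Fin m, blockStart g f j = k j) ↔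
      (∀ i, cutAt k (g i) ≤ f i ∧ (f i : ℕ) < cutAt k (g i + 1)) ∧
        ∀ j : Fin m, (j : ℕ) + 1 < m → ∃ i, g i = j ∧ (f i : ℕ) + 1 = cutAt k (j + 1) := by
  constructor
  · rintro ⟨hf, hs⟩
    have hcut : ∀ j (hj : j < m), cutAt k j = blockStart g f j := fun j hj => by
      rw [cutAt_of_lt hj, ← hs ⟨j, hj⟩]
    refine ⟨fun i => ⟨?_, ?_⟩, fun j hj => ?_⟩
    · rw [hcut _ (g i).isLt]; exact blockStart_le hf i
    · by_cases h : (g i : ℕ) + 1 < m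
      · rw [hcut _ h]; exact lt_blockStart_succ i
      · rw [cutAt_of_le (by omega)]; exact (f i).isLt
    · obtain ⟨i, hi, he⟩ := exists_add_one_eq_blockStart_succ hf (hg j)
      exact ⟨i, hi, by rw [he, hcut _ hj]⟩
  · rintro ⟨hI, hA⟩
    have hf : ∀ i i', g i < g i' → f i < f i' := fun i i' h => Fin.lt_def.2 <|
      calc (f i : ℕ) < cutAt k (g i + 1) := (hI i).2
        _ ≤ cutAt k (g i') := cutAt_mono hk (Fin.lt_def.1 h)
        _ ≤ f i' := (hI i').1
    refine ⟨hf, fun j => le_antisymm (Finset.sup_le fun i hi => ?_) ?_⟩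
    · simp only [mem_filter, mem_univ, true_and] at hi
      calc (f i : ℕ) + 1 ≤ cutAt k (g i + 1) := (hI i).2
        _ ≤ cutAt k j := cutAt_mono hk hi
        _ = k j := cutAt_of_lt j.isLt
    · obtain ⟨_ | j, hj⟩ := j
      · simp only [extSeq, hj, dite_true] at hk₀
        simp [hk₀]
      · obtain ⟨i, hi, he⟩ := hA ⟨j, by omega⟩ hj
        rw [← cutAt_of_lt hj, ← he]
        exact le_sup (f := fun i => (f i : ℕ) + 1) (by simp [hi])

end Fibers

section Counting

variable {ι : Type*} [Fintype ι] {m a : ℕ} (g : ι → Fin m)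

/-- The reduction mod `a` is a junk value: on block-increasing words `blockStart g f j < a`. -/
def blockStarts (ha : 0 < a) (f : ι → Fin a) : Fin m → Fin a :=
  fun j => ⟨blockStart g f j % a, Nat.mod_lt _ ha⟩

variable {g} {f : ι → Fin a} (hg : Function.Surjective g) (ha : 0 < a)

include hg in
lemma blockStarts_mem (hf : ∀ i i', g i < g i' → f i < f i') :
    extSeq (blockStarts g ha f) 0 = 0 ∧ StrictMono (blockStarts g ha f) := by
  have hval : ∀ j : Fin m, (blockStarts g ha f j : ℕ) = blockStart g f j := fun j =>
    Nat.mod_eq_of_lt (blockStart_lt hf (hg j))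
  refine ⟨?_, fun j j' h => Fin.lt_def.2 ?_⟩
  · unfold extSeq; split_ifs with h
    · rw [hval]; exact blockStart_zero
    · rfl
  · obtain ⟨i, rfl⟩ := hg j
    rw [hval, hval]
    calc blockStart g f (g i) ≤ f i := blockStart_le hf i
      _ < blockStart g f (g i + 1) := lt_blockStart_succ i
      _ ≤ blockStart g f j' := blockStart_mono (Fin.lt_def.1 h)

variable [DecidableEq ι]

variable (g) in
def blockWords (k : Fin m → Fin a) (j : Fin m) : Finset ({i // g i = j} → Fin a) :=
  {h | (∀ x, cutAt k j ≤ h x ∧ (h x : ℕ) < cutAt k (j + 1)) ∧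
    ((j : ℕ) + 1 < m → ∃ x, (h x : ℕ) + 1 = cutAt k (j + 1))}

lemma card_blockWords {k : Fin m → Fin a} (hk : StrictMono k) (j : Fin m) :
    #(blockWords g k j) =
      if (j : ℕ) + 1 < m then
        (cutAt k (j + 1) - cutAt k j) ^ Fintype.card {i // g i = j} -
          (cutAt k (j + 1) - cutAt k j - 1) ^ Fintype.card {i // g i = j}
      else (cutAt k (j + 1) - cutAt k j) ^ Fintype.card {i // g i = j} := by
  split_ifs with h
  · simp only [blockWords, h, forall_const]
    exact card_filter_forall_mem_Ico_and_exists _ (cutAt_lt_cutAt_succ hk h) (cutAt_le _)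
  · simp only [blockWords, h, false_imp_iff, and_true]
    exact card_filter_forall_mem_Ico _ (cutAt_le _)

lemma prod_card_blockWords (hm : 1 ≤ m) {D : ℕ → ℕ} (hD : ∀ j : Fin m, #{i | g i = j} = D j)
    {k : Fin m → Fin a} (hk : StrictMono k) :
    ∏ j, #(blockWords g k j) = seqTerm D m a (extSeq k) := by
  simp only [card_blockWords hk, Fintype.card_subtype, hD]
  obtain ⟨m, rfl⟩ : ∃ m', m = m' + 1 := ⟨m - 1, by omega⟩
  have hext : ∀ j < m + 1, cutAt k j = extSeq k j := fun j hj => by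
    rw [cutAt_of_lt hj, extSeq, dif_pos hj]
  rw [Fin.prod_univ_eq_prod_range (fun j => if j + 1 < m + 1 then
        (cutAt k (j + 1) - cutAt k j) ^ D j - (cutAt k (j + 1) - cutAt k j - 1) ^ D j
      else (cutAt k (j + 1) - cutAt k j) ^ D j), prod_range_succ, mul_comm, seqTerm,
    Nat.add_sub_cancel]
  congr 1
  · simp [cutAt_of_le, hext]
  · refine prod_congr rfl fun j hj => ?_
    rw [mem_range] at hj
    rw [if_pos (by omega), hext _ (by omega), hext _ (by omega)]

include hg in
lemma blockIncreasing_and_blockStarts_eq_iff {k : Fin m → Fin a} (hk₀ : extSeq k 0 = 0)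
    (hk : Monotone k) :
    ((∀ i i', g i < g i' → f i < f i') ∧ blockStarts g ha f = k) ↔
      ∀ j, (fun x : {i // g i = j} => f x) ∈ blockWords g k j := by
  calc _ ↔ (∀ i i', g i < g i' → f i < f i') ∧ ∀ j : Fin m, blockStart g f j = k j := by
        refine and_congr_right fun hf => ?_
        simp only [funext_iff, Fin.ext_iff, blockStarts,
          Nat.mod_eq_of_lt (blockStart_lt hf (hg _))]
    _ ↔ _ := blockIncreasing_and_blockStart_eq_iff hg hk₀ hk
    _ ↔ _ := by
      simp only [blockWords, mem_filter, mem_univ, true_and]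
      constructor
      · rintro ⟨hI, hA⟩ j
        refine ⟨fun ⟨i, hi⟩ => hi ▸ hI i, fun hj => ?_⟩
        obtain ⟨i, hi, he⟩ := hA j hj
        exact ⟨⟨i, hi⟩, he⟩
      · intro H
        refine ⟨fun i => (H (g i)).1 ⟨i, rfl⟩, fun j hj => ?_⟩
        obtain ⟨⟨i, hi⟩, he⟩ := (H j).2 hj
        exact ⟨i, hi, he⟩

end Counting

theorem card_blockIncreasing {ι : Type*} [Fintype ι] [DecidableEq ι] {m a : ℕ} (hm : 1 ≤ m)
    (ha : 0 < a) (g : ι → Fin m) (D : ℕ → ℕ) (hD : ∀ j : Fin m, #{i | g i = j} = D j)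
    (hD₁ : ∀ t < m, 1 ≤ D t) :
    #{f : ι → Fin a | ∀ i i', g i < g i' → f i < f i'} =
      ∑ k ∈ univ.filter fun k : Fin m → Fin a => extSeq k 0 = 0 ∧ StrictMono k,
        seqTerm D m a (extSeq k) := by
  have hg : Function.Surjective g := fun j => by
    obtain ⟨i, hi⟩ := card_pos.1 ((hD j).symm ▸ hD₁ j j.isLt)
    exact ⟨i, (mem_filter.1 hi).2⟩
  rw [card_eq_sum_card_fiberwise (f := blockStarts g ha)
    (t := univ.filter fun k : Fin m → Fin a => extSeq k 0 = 0 ∧ StrictMono k) fun f hf =>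
      mem_filter.2 ⟨mem_univ _, blockStarts_mem hg ha (mem_filter.1 hf).2⟩]
  refine sum_congr rfl fun k hk => ?_
  obtain ⟨hk₀, hk⟩ := (mem_filter.1 hk).2
  calc _ = #{f : ι → Fin a | ∀ j, (fun x : {i // g i = j} => f x) ∈ blockWords g k j} := by
        rw [filter_filter]
        exact congrArg card (filter_congr fun f _ =>
          blockIncreasing_and_blockStarts_eq_iff hg ha hk₀ hk.monotone)
    _ = ∏ j, #(blockWords g k j) := by convert card_filter_forall_restrict_mem g (blockWords g k)
    _ = seqTerm D m a (extSeq k) := prod_card_blockWords hm hD hk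

/-- The number of shuffle words producing the reversed pattern `w*` equals the sum over
integer sequences `0 = k_0 < k_1 < ⋯ < k_{m-1} < a` of the product above; consequently the
separation distance after an `a`-shuffle of the sorted deck equals
`1 - (n!/(D_1!⋯D_m!))·a^{-n}` times this sum. -/
theorem statement11 (m : ℕ) (hm : 1 ≤ m) (D : ℕ → ℕ) (hD : ∀ t < m, 1 ≤ D t)
    (a : ℕ) (ha : 1 ≤ a) (n : ℕ) (hn : n = ∑ t ∈ Finset.range m, D t)
    (SEP : ℝ)
    (hSEP : SEP = 1 - (n.factorial : ℝ) / (∏ t ∈ Finset.range m, ((D t).factorial : ℝ)) *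
      (((Finset.univ.filter fun f : Fin n → Fin a =>
          vpat D m f = fun i : Fin n => labelOf D m (n - 1 - (i : ℕ))).card : ℝ) /
        (a : ℝ) ^ n)) :
    ((Finset.univ.filter fun f : Fin n → Fin a =>
        vpat D m f = fun i : Fin n => labelOf D m (n - 1 - (i : ℕ))).card =
      ∑ k ∈ Finset.univ.filter fun k : Fin m → Fin a => extSeq k 0 = 0 ∧ StrictMono k,
        seqTerm D m a (extSeq k)) ∧
    SEP = 1 - (n.factorial : ℝ) / (∏ t ∈ Finset.range m, ((D t).factorial : ℝ)) *
      (((∑ k ∈ Finset.univ.filter fun k : Fin m → Fin a => extSeq k 0 = 0 ∧ StrictMono k,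
        seqTerm D m a (extSeq k) : ℕ) : ℝ) / (a : ℝ) ^ n) := by
  have hn' : n = dPrefix D m := hn
  let block : Fin n → Fin m := fun i => ⟨reversedPattern D m n i, reversedPattern_lt hn' i⟩
  have hblock : ∀ j : Fin m, #{i | block i = j} = D j := fun j => by
    simpa [block, Fin.ext_iff] using card_reversedPattern_eq hn' j.isLt
  have hcount :
      #{f : Fin n → Fin a | vpat D m f = fun i : Fin n => labelOf D m (n - 1 - (i : ℕ))} =
      ∑ k ∈ univ.filter fun k : Fin m → Fin a => extSeq k 0 = 0 ∧ StrictMono k,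
        seqTerm D m a (extSeq k) := by
    rw [← card_blockIncreasing hm ha block D hblock hD]
    congr 1; ext f
    simp only [mem_filter, mem_univ, true_and]
    exact vpat_eq_reversedPattern_iff hn' f
  exact ⟨hcount, by rw [hSEP, hcount]⟩
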